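/- Let 0 < μ ≤ 1 and ν > 0, and let g_{μ,ν} be the inner product on 𝔤_1 with matrix diag(1, μ, ν) in the basis e₀, e₁, e₂, with Ricci form Ric. Then the only endomorphism of 𝔤_1 that is skew-symmetric with respect to both g_{μ,ν} and Ric is 0. (Hence the isotropy of the isometry group of (G₁, g_{μ,ν}) is discrete and the full isometry group is G₁ itself.) -/

import Mathlib

noncomputable section

open scoped BigOperators

/-- The underlying space of the 3-dimensional Lie algebras under consideration. -/
abbrev V3 : Type := Fin 3 → ℝ

/-- The standard basis `e₀, e₁, e₂`. -/
def e3 (i : Fin 3) : V3 := Pi.single i 1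

/-- The bracket of the Lie algebra `𝔤_c`:
`[e₀,e₁] = 0`, `[e₂,e₀] = e₁`, `[e₂,e₁] = −c e₀ + 2 e₁`, extended bilinearly. -/
def braC (c : ℝ) (x y : V3) : V3 :=
  ![-c * (x 2 * y 1 - y 2 * x 1),
    (x 2 * y 0 - y 2 * x 0) + 2 * (x 2 * y 1 - y 2 * x 1),
    0]

/-- The inner product with matrix `diag(1,μ,ν)` in the basis `e₀,e₁,e₂`. -/
def gD (μ ν : ℝ) (x y : V3) : ℝ := x 0 * y 0 + μ * (x 1 * y 1) + ν * (x 2 * y 2)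

/-- The curvature tensor `R(X,Y)Z = ∇_X ∇_Y Z − ∇_Y ∇_X Z − ∇_{[X,Y]} Z`. -/
def Rc (br nab : V3 → V3 → V3) (X Y Z : V3) : V3 :=
  nab X (nab Y Z) - nab Y (nab X Z) - nab (br X Y) Z

/-- The Ricci form `Ric(X,Y) = tr (Z ↦ R(Z,X)Y)`. -/
def RicF (br nab : V3 → V3 → V3) (X Y : V3) : ℝ :=
  ∑ k : Fin 3, Rc br nab (e3 k) X Y k

/-!
The Koszul formula determines the Levi-Civita product, and with it the Ricci form, explicitly:
in the basis `e₀, e₁, e₂` the form `2μν · Ric` has Gram matrix `ricciMatrix μ ν`. An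
endomorphism with matrix `M` is skew for a form with Gram matrix `B` iff `Mᵀ B + B M = 0`.
For `B = diag(1, μ, ν)` this kills the diagonal of `M` and ties `M j i` to `M i j`; the Ricci
condition then leaves a single equation `2μ(μ² - 4μ - 1) M₁₀ = 0`, whose coefficient is
negative for `0 < μ ≤ 1`, and a 2 × 2 system in `(M₀₂, M₁₂)` of determinant `-2(μ + 1)²`.
-/

open Matrix

theorem Matrix.transpose_mul_add_mul_eq_zero_of_skew {R n : Type*} [Semiring R] [Fintype n]
    [DecidableEq n] (B M : Matrix n n R)
    (h : ∀ x y, (M *ᵥ x) ⬝ᵥ (B *ᵥ y) + x ⬝ᵥ (B *ᵥ (M *ᵥ y)) = 0) :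
    Mᵀ * B + B * M = 0 := by
  ext i j
  have := h (Pi.single i 1) (Pi.single j 1)
  simp only [mulVec_single_one, single_one_dotProduct] at this
  simpa [mul_apply, dotProduct, mulVec] using this

def lcNabla (μ ν : ℝ) (x y : V3) : V3 :=
  ![(1 - μ) / 2 * (x 1 * y 2) - (1 + μ) / 2 * (x 2 * y 1),
    (1 / μ - 1) / 2 * (x 0 * y 2) + (1 / μ + 1) / 2 * (x 2 * y 0) - 2 * (x 1 * y 2),
    (μ - 1) / (2 * ν) * (x 0 * y 1 + x 1 * y 0) + 2 * μ / ν * (x 1 * y 1)]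

theorem eq_lcNabla_of_koszul {μ ν : ℝ} (hμ : μ ≠ 0) (hν : ν ≠ 0) {nab : V3 → V3 → V3}
    (hK : ∀ X Y Z : V3, 2 * gD μ ν (nab X Y) Z =
      gD μ ν (braC 1 X Y) Z - gD μ ν (braC 1 Y Z) X + gD μ ν (braC 1 Z X) Y) :
    nab = lcNabla μ ν := by
  funext X Y i
  have h := hK X Y (e3 i)
  fin_cases i <;>
  · simp [gD, braC, e3, lcNabla] at h ⊢
    field_simp at h ⊢
    linear_combination h

theorem gD_eq_dotProduct (μ ν : ℝ) (x y : V3) :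
    gD μ ν x y = x ⬝ᵥ (diagonal ![1, μ, ν] *ᵥ y) := by
  simp only [gD, dotProduct, mulVec_diagonal, Fin.sum_univ_three, cons_val_zero, cons_val_one,
    cons_val, one_mul]
  ring

/-- Gram matrix of `2μν · Ric` for the Levi-Civita connection of `g_{μ,ν}`. -/
def ricciMatrix (μ ν : ℝ) : Matrix (Fin 3) (Fin 3) ℝ :=
  !![1 - μ ^ 2, -4 * μ ^ 2, 0;
     -4 * μ ^ 2, μ * (μ ^ 2 - 8 * μ - 1), 0;
     0, 0, -ν * (1 + 6 * μ + μ ^ 2)]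

theorem ricF_lcNabla {μ ν : ℝ} (hμ : μ ≠ 0) (hν : ν ≠ 0) (x y : V3) :
    2 * μ * ν * RicF (braC 1) (lcNabla μ ν) x y = x ⬝ᵥ (ricciMatrix μ ν *ᵥ y) := by
  simp only [RicF, Rc, lcNabla, braC, e3, ricciMatrix, dotProduct, mulVec, Fin.sum_univ_three,
    Pi.sub_apply, Pi.single_apply, Fin.isValue, Fin.reduceEq, if_true, if_false, of_apply,
    cons_val', cons_val_zero, cons_val_one, cons_val, cons_val_fin_one]
  field_simp
  ring

theorem eq_zero_of_skew_diagonal_of_skew_ricciMatrix {μ ν : ℝ} (hμ : 0 < μ) (hμ1 : μ ≤ 1)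
    (hν : 0 < ν) {M : Matrix (Fin 3) (Fin 3) ℝ}
    (hg : Mᵀ * diagonal ![1, μ, ν] + diagonal ![1, μ, ν] * M = 0)
    (hR : Mᵀ * ricciMatrix μ ν + ricciMatrix μ ν * M = 0) : M = 0 := by
  have g00 := congrFun₂ hg 0 0
  have g11 := congrFun₂ hg 1 1
  have g22 := congrFun₂ hg 2 2
  have g01 := congrFun₂ hg 0 1
  have g02 := congrFun₂ hg 0 2
  have g12 := congrFun₂ hg 1 2
  have r01 := congrFun₂ hR 0 1
  have r02 := congrFun₂ hR 0 2
  have r12 := congrFun₂ hR 1 2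
  simp only [Matrix.add_apply, mul_diagonal, diagonal_mul, transpose_apply, Matrix.zero_apply,
    cons_val] at g00 g11 g22 g01 g02 g12
  simp only [Matrix.add_apply, mul_apply, transpose_apply, Fin.sum_univ_three, ricciMatrix,
    of_apply, cons_val', cons_val, Matrix.zero_apply] at r01 r02 r12
  set c := 1 + 6 * μ + μ ^ 2
  have m00 : M 0 0 = 0 := by linear_combination g00 / 2
  have m11 : M 1 1 = 0 :=
    eq_zero_of_ne_zero_of_mul_left_eq_zero (by positivity : 2 * μ ≠ 0) (by linear_combination g11)
  have m22 : M 2 2 = 0 :=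
    eq_zero_of_ne_zero_of_mul_left_eq_zero (by positivity : 2 * ν ≠ 0) (by linear_combination g22)
  have m10 : M 1 0 = 0 := by
    have hneg : 2 * μ * (μ ^ 2 - 4 * μ - 1) < 0 := by nlinarith
    exact eq_zero_of_ne_zero_of_mul_left_eq_zero hneg.ne
      (by linear_combination r01 - (1 - μ ^ 2) * g01 + 4 * μ ^ 2 * m00 + 4 * μ ^ 2 * m11)
  have m01 : M 0 1 = 0 := by linear_combination g01 - μ * m10
  have m02 : M 0 2 = 0 :=
    eq_zero_of_ne_zero_of_mul_left_eq_zero (by positivity : (μ + 1) ^ 2 ≠ 0)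
      (by linear_combination (-(μ - 1) / 2) * (r02 + c * g02) - (r12 + c * g12))
  have m12 : M 1 2 = 0 :=
    eq_zero_of_ne_zero_of_mul_left_eq_zero (by positivity : 4 * μ ^ 2 ≠ 0)
      (by linear_combination -(r02 + c * g02) + (2 + 6 * μ) * m02)
  have m20 : M 2 0 = 0 :=
    eq_zero_of_ne_zero_of_mul_left_eq_zero hν.ne' (by linear_combination g02 - m02)
  have m21 : M 2 1 = 0 :=
    eq_zero_of_ne_zero_of_mul_left_eq_zero hν.ne' (by linear_combination g12 - μ * m12)
  ext i j
  fin_cases i <;> fin_cases j <;> simp [*]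

/-- the only endomorphism of `𝔤_1` that is skew-symmetric with respect
to both `g_{μ,ν}` and its Ricci form is `0`. -/
theorem stmt8 (μ ν : ℝ) (hμ : 0 < μ) (hμ1 : μ ≤ 1) (hν : 0 < ν) (nab : V3 → V3 → V3)
    (hK : ∀ X Y Z : V3, 2 * gD μ ν (nab X Y) Z =
      gD μ ν (braC 1 X Y) Z - gD μ ν (braC 1 Y Z) X + gD μ ν (braC 1 Z X) Y) :
    ∀ A : Module.End ℝ V3,
      (∀ x y : V3, gD μ ν (A x) y + gD μ ν x (A y) = 0) →
      (∀ x y : V3, RicF (braC 1) nab (A x) y + RicF (braC 1) nab x (A y) = 0) →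
      A = 0 := by
  intro A hg hRic
  rw [eq_lcNabla_of_koszul hμ.ne' hν.ne' hK] at hRic
  rw [← LinearMap.toMatrix'.map_eq_zero_iff]
  apply eq_zero_of_skew_diagonal_of_skew_ricciMatrix hμ hμ1 hν <;>
    refine transpose_mul_add_mul_eq_zero_of_skew _ _ fun x y => ?_ <;>
    simp only [LinearMap.toMatrix'_mulVec]
  · simpa only [gD_eq_dotProduct] using hg x y
  · rw [← ricF_lcNabla hμ.ne' hν.ne', ← ricF_lcNabla hμ.ne' hν.ne', ← mul_add, hRic x y, mul_zero]
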